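/- Let G be a unified chain graph (UCG) over a finite vertex set V with topologically sorted chain components K_1, …, K_n, and let p = N(0, Σ) be a Gaussian distribution on ℝ^V with Σ positive definite that satisfies Equation 1 (the chain-component factorization) and the zero restrictions of Equations 6–8 with respect to G. Then (Σ⁻¹)_{i,j} = 0 for all i, j ∈ V such that there is no pure collider route in G between i and j. -/

import Mathlib

open Matrix MeasureTheory ProbabilityTheory

attribute [local instance] Classical.propDecidable

noncomputable section

variable {V : Type*}

/-- The submatrix of `S` with rows indexed by `X` and columns indexed by `Y`. -/
def msub (S : Matrix V V ℝ) (X Y : Finset V) : Matrix X Y ℝ :=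
  Matrix.of fun i j => S i.1 j.1

/-- Conditional independence `X ⊥ Y | Z` for a centered Gaussian distribution with
positive definite covariance matrix `S`:  `Σ_{X,Y} − Σ_{X,Z} (Σ_{Z,Z})⁻¹ Σ_{Z,Y} = 0`. -/
def gaussCI [Fintype V] [DecidableEq V] (S : Matrix V V ℝ) (X Y Z : Finset V) : Prop :=
  msub S X Y - msub S X Z * (msub S Z Z)⁻¹ * msub S Z Y = 0

/-- Pairwise disjointness of three sets. -/
def PDisj (X Y Z : Finset V) : Prop :=
  Disjoint X Y ∧ Disjoint X Z ∧ Disjoint Y Z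

/-- Pairwise disjointness of four sets. -/
def PDisj4 (X Y W Z : Finset V) : Prop :=
  Disjoint X Y ∧ Disjoint X W ∧ Disjoint X Z ∧ Disjoint Y W ∧ Disjoint Y Z ∧ Disjoint W Z

/-- A graph with three kinds of edges: undirected (`undir`), solid directed (`solid`,
written `A → B`) and dashed directed (`dashed`, written `A ⇢ B`).  No axioms are imposed. -/
structure PreGraph (V : Type*) where
  undir : V → V → Prop
  solid : V → V → Prop
  dashed : V → V → Prop

namespace PreGraph

variable (G : PreGraph V)

/-- There is an undirected edge between `a` and `b`. -/
def und (a b : V) : Prop := G.undir a b ∨ G.undir b a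

/-- `a` and `b` are adjacent. -/
def adj (a b : V) : Prop :=
  G.und a b ∨ G.solid a b ∨ G.solid b a ∨ G.dashed a b ∨ G.dashed b a

/-- The edge between `a` and `b` is undirected or directed (solid or dashed) from `a` to `b`. -/
def fwd (a b : V) : Prop := G.und a b ∨ G.solid a b ∨ G.dashed a b

/-- A route in `G`: a sequence of nodes `nodes 0, nodes 1, …, nodes len` such that
consecutive nodes are adjacent. -/
structure Route (G : PreGraph V) where
  len : ℕ
  nodes : ℕ → V
  adj_step : ∀ i < len, G.adj (nodes i) (nodes (i + 1))

/-- `c` is a collider node between `a` and `b`:  `a ⇢ c ⇠ b`, `a ⇢ c − b` (in either of the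
two traversal directions) or `a ⇢ c ← b` (in either of the two traversal directions). -/
def colliderTriple (a c b : V) : Prop :=
  (G.dashed a c ∧ G.dashed b c) ∨
  (G.dashed a c ∧ G.und c b) ∨ (G.und a c ∧ G.dashed b c) ∨
  (G.dashed a c ∧ G.solid b c) ∨ (G.solid a c ∧ G.dashed b c)

variable {G} in
/-- The node at position `k` of the route `ρ` is a collider node of `ρ`. -/
def Route.colliderNodeAt (ρ : G.Route) (k : ℕ) : Prop :=
  1 ≤ k ∧ k < ρ.len ∧ G.colliderTriple (ρ.nodes (k - 1)) (ρ.nodes k) (ρ.nodes (k + 1))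

variable {G} in
/-- The positions `p, …, q` of `ρ` form a collider section of `ρ`, i.e. a maximal undirected
subroute `C1 − ⋯ − Cn` of `ρ` such that `A → C1 − ⋯ − Cn ← B` is a subroute of `ρ`. -/
def Route.colliderSectionOcc (ρ : G.Route) (p q : ℕ) : Prop :=
  1 ≤ p ∧ p ≤ q ∧ q + 1 ≤ ρ.len ∧
  (∀ m, p ≤ m → m < q → G.und (ρ.nodes m) (ρ.nodes (m + 1))) ∧
  G.solid (ρ.nodes (p - 1)) (ρ.nodes p) ∧ G.solid (ρ.nodes (q + 1)) (ρ.nodes q)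

variable {G} in
/-- The node at position `k` of `ρ` lies in a collider section of `ρ`. -/
def Route.inColliderSectionAt (ρ : G.Route) (k : ℕ) : Prop :=
  ∃ p q, ρ.colliderSectionOcc p q ∧ p ≤ k ∧ k ≤ q

variable {G} in
/-- The route `ρ` is `Z`-open: (i) all collider nodes are in `Z`, (ii) every collider
section contains some node of `Z`, and (iii) every node which is neither a collider node
nor inside a collider section is outside `Z`. -/
def Route.IsZOpen (ρ : G.Route) (Z : Finset V) : Prop :=
  (∀ k, ρ.colliderNodeAt k → ρ.nodes k ∈ Z) ∧
  (∀ p q, ρ.colliderSectionOcc p q → ∃ m, p ≤ m ∧ m ≤ q ∧ ρ.nodes m ∈ Z) ∧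
  (∀ k ≤ ρ.len, ¬ ρ.colliderNodeAt k → ¬ ρ.inColliderSectionAt k → ρ.nodes k ∉ Z)

variable {G} in
/-- A pure collider route (with at least one edge): every intermediate node is a collider
node or lies in a collider section of the route. -/
def Route.IsPureCollider (ρ : G.Route) : Prop :=
  1 ≤ ρ.len ∧ ∀ k, 0 < k → k < ρ.len → ρ.colliderNodeAt k ∨ ρ.inColliderSectionAt k

/-- Separation `X ⊥_G Y | Z`: there is no `Z`-open route in `G` between a node of `X` and a
node of `Y`. -/
def Sep (X Y Z : Finset V) : Prop :=
  ¬ ∃ ρ : G.Route,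
      ((ρ.nodes 0 ∈ X ∧ ρ.nodes ρ.len ∈ Y) ∨ (ρ.nodes 0 ∈ Y ∧ ρ.nodes ρ.len ∈ X)) ∧
      ρ.IsZOpen Z

section Finite

variable [Fintype V] [DecidableEq V]

/-- The fathers of `X`: nodes `b` with `b → a` in `G` for some `a ∈ X`. -/
def fa (X : Finset V) : Finset V := Finset.univ.filter fun b => ∃ a ∈ X, G.solid b a

/-- The mothers of `X`: nodes `b` with `b ⇢ a` in `G` for some `a ∈ X`. -/
def mo (X : Finset V) : Finset V := Finset.univ.filter fun b => ∃ a ∈ X, G.dashed b a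

/-- The parents of `X`. -/
def pa (X : Finset V) : Finset V := G.fa X ∪ G.mo X

/-- The neighbors of `X`: nodes `b` with `b − a` in `G` for some `a ∈ X`. -/
def nb (X : Finset V) : Finset V := Finset.univ.filter fun b => ∃ a ∈ X, G.und b a

/-- There is a descending route from `a` to `b`: all edges undirected or directed in the
direction of travel, containing at least one directed edge. -/
def descends (a b : V) : Prop :=
  ∃ (n : ℕ) (f : ℕ → V), f 0 = a ∧ f n = b ∧ (∀ i < n, G.fwd (f i) (f (i + 1))) ∧
    ∃ i < n, G.solid (f i) (f (i + 1)) ∨ G.dashed (f i) (f (i + 1))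

/-- The non-descendants of `X`. -/
def nd (X : Finset V) : Finset V := Finset.univ.filter fun b => ¬ ∃ a ∈ X, G.descends a b

/-- Connectivity by undirected routes. -/
def uconn : V → V → Prop := Relation.ReflTransGen G.und

/-- The chain component containing `i`. -/
def cc (i : V) : Finset V := Finset.univ.filter fun j => G.uconn i j

/-- The set of chain components of `G`. -/
def ccs : Finset (Finset V) := Finset.univ.image G.cc

/-- The nodes incident to some edge of `G`. -/
def verts : Finset V := Finset.univ.filter fun a => ∃ b, G.adj a b

/-- `π` is a topological ordering of the chain components: it is constant on components and
increases along directed edges. -/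
def IsTopoOrder (π : V → ℕ) : Prop :=
  (∀ a b, G.uconn a b → π a = π b) ∧ ∀ a b, G.solid a b ∨ G.dashed a b → π a < π b

/-- Equation 1: for every topological ordering of the chain components, each component `K`
is independent of the preceding components minus `Pa(K)` given `Pa(K)`. -/
def eq1 (S : Matrix V V ℝ) : Prop :=
  ∀ π : V → ℕ, G.IsTopoOrder π → ∀ i : V,
    gaussCI S (G.cc i) ((Finset.univ.filter fun b => π b < π i) \ G.pa (G.cc i))
      (G.pa (G.cc i))

/-- The regression coefficients `β_K = Σ_{K,Pa(K)} (Σ_{Pa(K),Pa(K)})⁻¹`. -/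
def beta (S : Matrix V V ℝ) (K : Finset V) : Matrix K (G.pa K) ℝ :=
  msub S K (G.pa K) * (msub S (G.pa K) (G.pa K))⁻¹

/-- The conditional covariance matrix `Λ_K`. -/
def lam (S : Matrix V V ℝ) (K : Finset V) : Matrix K K ℝ :=
  msub S K K - msub S K (G.pa K) * (msub S (G.pa K) (G.pa K))⁻¹ * msub S (G.pa K) K

/-- The precision matrix `Ω = (Σ_{K ∪ Pa(K), K ∪ Pa(K)})⁻¹`. -/
def om (S : Matrix V V ℝ) (K : Finset V) : Matrix ↥(K ∪ G.pa K) ↥(K ∪ G.pa K) ℝ :=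
  (msub S (K ∪ G.pa K) (K ∪ G.pa K))⁻¹

/-- Equation 6: `(β_K)_{i,j} = 0` for all `i ∈ K` and `j ∈ Mo(K) ∖ Mo(i)`. -/
def eq6 (S : Matrix V V ℝ) : Prop :=
  ∀ K ∈ G.ccs, ∀ i (hi : i ∈ K), ∀ j (hj : j ∈ G.pa K),
    j ∈ G.mo K → j ∉ G.mo {i} → G.beta S K ⟨i, hi⟩ ⟨j, hj⟩ = 0

/-- Equation 7: `Ω_{i,j} = 0` for all `i ∈ K` and `j ∈ Fa(K) ∖ Fa(i)`. -/
def eq7 (S : Matrix V V ℝ) : Prop :=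
  ∀ K ∈ G.ccs, ∀ i (hi : i ∈ K), ∀ j (hj : j ∈ G.pa K),
    j ∈ G.fa K → j ∉ G.fa {i} →
    G.om S K ⟨i, Finset.mem_union_left _ hi⟩ ⟨j, Finset.mem_union_right _ hj⟩ = 0

/-- Equation 8: `(Λ_K⁻¹)_{i,j} = 0` for all `i ∈ K` and `j ∈ K ∖ ({i} ∪ Ne(i))`. -/
def eq8 (S : Matrix V V ℝ) : Prop :=
  ∀ K ∈ G.ccs, ∀ i (hi : i ∈ K), ∀ j (hj : j ∈ K),
    j ≠ i → j ∉ G.nb {i} → (G.lam S K)⁻¹ ⟨i, hi⟩ ⟨j, hj⟩ = 0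

/-- `p` satisfies Equation 1 and the zero restrictions of Equations 6–8 w.r.t. `G`. -/
def eqs (S : Matrix V V ℝ) : Prop := G.eq1 S ∧ G.eq6 S ∧ G.eq7 S ∧ G.eq8 S

/-- The global Markov property with respect to `G`, for an abstract ternary
(conditional-independence) relation `I`. -/
def globalMP (I : Finset V → Finset V → Finset V → Prop) : Prop :=
  ∀ X Y Z : Finset V, PDisj X Y Z → G.Sep X Y Z → I X Y Z

/-- The block-recursive Markov property (B1)–(B3) with respect to `G`. -/
def blockRecMP (I : Finset V → Finset V → Finset V → Prop) : Prop :=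
  ∀ K ∈ G.ccs, ∀ i ∈ K,
    I {i} (((G.nd K \ K) \ G.fa K) \ G.mo {i}) (G.fa K ∪ G.mo {i}) ∧
    I {i} (((G.nd K \ K) \ G.fa {i}) \ G.mo K) ((K \ {i}) ∪ G.fa {i} ∪ G.mo K) ∧
    ∀ j ∈ K, j ≠ i → j ∉ G.nb {i} → I {i} {j} ((K \ {i, j}) ∪ G.pa K)

/-- The pairwise Markov property (P1)–(P2) with respect to `G`. -/
def pairwiseMP (I : Finset V → Finset V → Finset V → Prop) : Prop :=
  ∀ i j : V, i ≠ j → ¬ G.adj i j → ∀ K ∈ G.ccs, i ∈ K →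
    (j ∈ ((G.nd {i} \ K) \ G.fa K) \ G.mo {i} → I {i} {j} ((G.nd {i} \ K) \ {j})) ∧
    (j ∈ ((G.nd {i} \ {i}) \ G.fa {i}) \ G.mo K → I {i} {j} (G.nd {i} \ {i, j}))

/-- The local Markov property (L1)–(L2) with respect to `G`. -/
def localMP (I : Finset V → Finset V → Finset V → Prop) : Prop :=
  ∀ K ∈ G.ccs, ∀ i ∈ K,
    I {i} (((G.nd {i} \ K) \ G.fa K) \ G.mo {i}) (G.fa K ∪ G.mo {i}) ∧
    I {i} ((((G.nd {i} \ {i}) \ G.pa {i}) \ G.nb {i}) \ G.mo (G.nb {i}))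
      (G.pa {i} ∪ G.nb {i} ∪ G.mo (G.nb {i}))

/-- The subgraph `G^U`: it keeps the edge `A ⊸ B` (with its type and orientation) iff `G`
has a route `A ⊸ B ⊸ ⋯ ⊸ C` with `C ∈ U`, all edges undirected or directed in the
direction of travel, and no subroute `R ⇢ S − T`. -/
def goodFrom (U : Finset V) (a b : V) : Prop :=
  ∃ (f : ℕ → V) (n : ℕ), 1 ≤ n ∧ f 0 = a ∧ f 1 = b ∧ f n ∈ U ∧
    (∀ i < n, G.fwd (f i) (f (i + 1))) ∧
    ∀ i, i + 2 ≤ n → ¬ (G.dashed (f i) (f (i + 1)) ∧ G.und (f (i + 1)) (f (i + 2)))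

/-- The graph `G^U`. -/
def derived (U : Finset V) : PreGraph V where
  undir a b := G.undir a b ∧ G.goodFrom U a b
  solid a b := G.solid a b ∧ G.goodFrom U a b
  dashed a b := G.dashed a b ∧ G.goodFrom U a b

/-- The set `Y'` used in Lemmas 2 and 3:
`Y' = {B' ∈ V(G^{X∪Y∪Z}) ∖ (X ∪ Z) : X ⊥_{G^{X∪Y∪Z}} B' | Z}`. -/
def derivedYp (X Y Z : Finset V) : Finset V :=
  ((G.derived (X ∪ Y ∪ Z)).verts \ (X ∪ Z)).filter fun b =>
    (G.derived (X ∪ Y ∪ Z)).Sep X {b} Z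

/-- The set `X' = V(G^{X∪Y∪Z}) ∖ (Y' ∪ Z)` used in Lemmas 2 and 3. -/
def derivedXp (X Y Z : Finset V) : Finset V :=
  (G.derived (X ∪ Y ∪ Z)).verts \ (G.derivedYp X Y Z ∪ Z)

end Finite

end PreGraph

/-- A chain graph: at most one edge between any pair of distinct nodes (undirected, solid
directed, or dashed directed) and no semidirected cycles. -/
structure ChainGraph (V : Type*) extends PreGraph V where
  undir_symm : ∀ a b, toPreGraph.undir a b → toPreGraph.undir b a
  undir_irrefl : ∀ a, ¬ toPreGraph.undir a a
  solid_irrefl : ∀ a, ¬ toPreGraph.solid a a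
  dashed_irrefl : ∀ a, ¬ toPreGraph.dashed a a
  undir_not_solid : ∀ a b, toPreGraph.undir a b → ¬ toPreGraph.solid a b
  undir_not_dashed : ∀ a b, toPreGraph.undir a b → ¬ toPreGraph.dashed a b
  solid_not_solid : ∀ a b, toPreGraph.solid a b → ¬ toPreGraph.solid b a
  solid_not_dashed : ∀ a b, toPreGraph.solid a b → ¬ toPreGraph.dashed a b
  solid_not_dashed_rev : ∀ a b, toPreGraph.solid a b → ¬ toPreGraph.dashed b a
  dashed_not_dashed : ∀ a b, toPreGraph.dashed a b → ¬ toPreGraph.dashed b a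
  no_semidirected_cycle : ¬ ∃ (f : ℕ → V) (n : ℕ), 1 ≤ n ∧ f n = f 0 ∧
    (toPreGraph.solid (f 0) (f 1) ∨ toPreGraph.dashed (f 0) (f 1)) ∧
    ∀ i < n, toPreGraph.fwd (f i) (f (i + 1))

namespace ChainGraph

variable (G : ChainGraph V)

/-- An LWF chain graph: no dashed directed edges. -/
def IsLWF : Prop := ∀ a b, ¬ G.toPreGraph.dashed a b

/-- An AMP chain graph: no solid directed edges. -/
def IsAMP : Prop := ∀ a b, ¬ G.toPreGraph.solid a b

/-- A unified chain graph: `Fa(K) ∩ Mo(K) = ∅` for every chain component `K`. -/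
def IsUCG [Fintype V] [DecidableEq V] : Prop :=
  ∀ K ∈ G.toPreGraph.ccs, Disjoint (G.toPreGraph.fa K) (G.toPreGraph.mo K)

end ChainGraph


/-- The AMP chain graph obtained from `G` by deleting every solid directed edge. -/
def ChainGraph.dropSolid (G : ChainGraph V) : ChainGraph V where
  undir := G.toPreGraph.undir
  solid _ _ := False
  dashed := G.toPreGraph.dashed
  undir_symm := G.undir_symm
  undir_irrefl := G.undir_irrefl
  solid_irrefl _ h := h
  dashed_irrefl := G.dashed_irrefl
  undir_not_solid _ _ _ h := h
  undir_not_dashed := G.undir_not_dashed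
  solid_not_solid _ _ h := h.elim
  solid_not_dashed _ _ h := h.elim
  solid_not_dashed_rev _ _ h := h.elim
  dashed_not_dashed := G.dashed_not_dashed
  no_semidirected_cycle := fun ⟨f, n, hn, hcyc, hstart, hsteps⟩ =>
    G.no_semidirected_cycle ⟨f, n, hn, hcyc, Or.inr (hstart.resolve_left id),
      fun i hi => (hsteps i hi).imp id (Or.imp False.elim id)⟩

/-- The restriction of `ω : V → ℝ` to the coordinates in `S`. -/
def marg (S : Finset V) : (V → ℝ) → (S → ℝ) := fun ω s => ω s.1

lemma marg_measurable (S : Finset V) : Measurable (marg (V := V) S) :=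
  measurable_pi_lambda _ fun s => measurable_pi_apply s.1

/-- Conditional independence of the coordinate tuples indexed by `X` and `Y` given the
coordinate tuple indexed by `Z`, for a distribution `μ` on `ℝ^V`. -/
def mCI [Fintype V] (μ : Measure (V → ℝ)) [IsFiniteMeasure μ] (X Y Z : Finset V) : Prop :=
  CondIndepFun (MeasurableSpace.comap (marg Z) inferInstance) ((marg_measurable Z).comap_le)
    (marg X) (marg Y) μ

/-- A probability distribution `μ` on `ℝ^V` satisfies the global Markov property with
respect to `G`. -/
def measGlobalMarkov [Fintype V] [DecidableEq V] (G : PreGraph V) (μ : Measure (V → ℝ))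
    [IsFiniteMeasure μ] : Prop :=
  ∀ X Y Z : Finset V, PDisj X Y Z → G.Sep X Y Z → mCI μ X Y Z

/-- A graphoid over `V`: a ternary relation on pairwise disjoint subsets of `V` satisfying
symmetry, decomposition, weak union, contraction and intersection. -/
structure Graphoid (V : Type*) [DecidableEq V] where
  rel : Finset V → Finset V → Finset V → Prop
  symmetry : ∀ X Y Z : Finset V, PDisj X Y Z → rel X Y Z → rel Y X Z
  decomposition : ∀ X Y W Z : Finset V, PDisj4 X Y W Z → rel X (Y ∪ W) Z → rel X Y Z
  weakUnion : ∀ X Y W Z : Finset V, PDisj4 X Y W Z → rel X (Y ∪ W) Z → rel X Y (Z ∪ W)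
  contraction : ∀ X Y W Z : Finset V, PDisj4 X Y W Z →
    rel X Y (Z ∪ W) → rel X W Z → rel X (Y ∪ W) Z
  intersection : ∀ X Y W Z : Finset V, PDisj4 X Y W Z →
    rel X Y (Z ∪ W) → rel X W (Z ∪ Y) → rel X (Y ∪ W) Z

/-- The conditional variance `Σ_{a,a|B} = Σ_{a,a} − Σ_{a,B} (Σ_{B,B})⁻¹ Σ_{B,a}`. -/
def condVar [Fintype V] [DecidableEq V] (S : Matrix V V ℝ) (a : V) (B : Finset V) : ℝ :=
  S a a - ∑ b₁ : B, ∑ b₂ : B, S a b₁.1 * (msub S B B)⁻¹ b₁ b₂ * S b₂.1 a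

/-!
Let `E_K = (I, -β_K)` (`regResid S K (Pa K)` below) be the map sending `x ∈ ℝ^V` to the residual
`x_K - β_K x_{Pa(K)}` of the regression of `x_K` on `x_{Pa(K)}`. Its covariance is
`E_K Σ E_Kᵀ = Λ_K`, and Equation 1 makes the residuals of different chain components
uncorrelated (order them by a topological ordering in which distinct components get distinct
ranks). Hence the matrix `E` stacking the `E_K` satisfies `E Σ Eᵀ = diag(Λ_K)`, so `E` is
invertible and `Σ⁻¹ = ∑_K E_Kᵀ Λ_K⁻¹ E_K`.

The `(i, j)` entry of the `K`-th summand is `∑_k (E_K)_{k,i} (Λ_K⁻¹ E_K)_{k,j}`, and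
`Λ_K⁻¹ E_K` is the `K`-row block of `Ω = (Σ_{K∪Pa(K),K∪Pa(K)})⁻¹`. If `i` is not a father of
`K`, Equation 6 shows that `(E_K)_{k,i} ≠ 0` forces `i = k` or `i ⇢ k`, and Equations 6–8 show
that `(Λ_K⁻¹ E_K)_{k,j} ≠ 0` forces `j = k`, `j − k`, `j → k` or `j ⇢ l` with `l = k` or
`l − k`; every combination yields a pure collider route between `i` and `j`. The summand is
symmetric, so the case that only `i` is a father reduces to the previous one, and two fathers
`i → c`, `j → d` of `K` are joined by the pure collider route `i → c − ⋯ − d ← j`.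
-/

lemma exists_seq_of_reflTransGen {α : Type*} {r : α → α → Prop} {x y : α}
    (h : Relation.ReflTransGen r x y) :
    ∃ (n : ℕ) (f : ℕ → α), f 0 = x ∧ f n = y ∧ ∀ i < n, r (f i) (f (i + 1)) := by
  induction h with
  | refl => exact ⟨0, fun _ => x, rfl, rfl, fun i hi => absurd hi (Nat.not_lt_zero i)⟩
  | @tail b c _ hbc ih =>
    obtain ⟨n, f, h0, hn, hs⟩ := ih
    refine ⟨n + 1, fun i => if i ≤ n then f i else c, by simp [h0], by simp, fun i hi => ?_⟩
    rcases Nat.lt_succ_iff_lt_or_eq.mp hi with hlt | rfl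
    · simpa [hlt.le, Nat.succ_le_of_lt hlt] using hs i hlt
    · simpa [hn] using hbc

section CoordinateProjections

variable [DecidableEq V]

def coordProj (X : Finset V) : Matrix X V ℝ := Matrix.of fun x v => if x.1 = v then 1 else 0

lemma mul_coordProj_apply {m : Type*} (X : Finset V) (M : Matrix m X ℝ) (a : m) (v : V) :
    (M * coordProj X) a v = if h : v ∈ X then M a ⟨v, h⟩ else 0 := by
  rw [mul_apply]
  split_ifs with h
  · rw [Fintype.sum_eq_single ⟨v, h⟩ fun x hx => by
      simp [coordProj, show x.1 ≠ v from fun e => hx (Subtype.ext e)]]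
    simp [coordProj]
  · exact Finset.sum_eq_zero fun x _ => by
      simp [coordProj, show x.1 ≠ v from fun e => h (e ▸ x.2)]

lemma coordProj_transpose_mul_mul_coordProj_apply (X : Finset V) (A : Matrix X X ℝ) {a b : V}
    (ha : a ∈ X) (hb : b ∈ X) :
    ((coordProj X)ᵀ * A * coordProj X) a b = A ⟨a, ha⟩ ⟨b, hb⟩ := by
  rw [mul_coordProj_apply, dif_pos hb, ← transpose_apply ((coordProj X)ᵀ * A), transpose_mul,
    transpose_transpose, mul_coordProj_apply, dif_pos ha, transpose_apply]

lemma coordProj_transpose_mul_coordProj (X : Finset V) :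
    (coordProj X)ᵀ * coordProj X = diagonal fun v => if v ∈ X then 1 else 0 := by
  ext a b
  rw [mul_coordProj_apply, diagonal_apply]
  by_cases hb : b ∈ X <;> by_cases hab : a = b <;> simp [coordProj, hb, hab, eq_comm]

lemma coordProj_transpose_mul_coordProj_union {X Y : Finset V} (h : Disjoint X Y) :
    (coordProj (X ∪ Y))ᵀ * coordProj (X ∪ Y) =
      (coordProj X)ᵀ * coordProj X + (coordProj Y)ᵀ * coordProj Y := by
  simp only [coordProj_transpose_mul_coordProj, diagonal_add]
  congr 1; ext v
  by_cases hX : v ∈ X <;> by_cases hY : v ∈ Y <;> simp [hX, hY]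
  exact Finset.disjoint_left.mp h hX hY

lemma sum_coordProj_transpose_mul_coordProj {P : Finset (Finset V)}
    (hdisj : (P : Set (Finset V)).PairwiseDisjoint id) (hcover : ∀ v, ∃ K ∈ P, v ∈ K) :
    ∑ K ∈ P, (coordProj K)ᵀ * coordProj K = 1 := by
  ext a b
  obtain ⟨K₀, hK₀, ha⟩ := hcover a
  rw [Matrix.sum_apply, Finset.sum_eq_single K₀]
  · simp [coordProj_transpose_mul_coordProj, diagonal_apply, one_apply, ha]
  · intro K hK hne
    have ha' : a ∉ K := fun ha' => Finset.disjoint_left.mp (hdisj hK hK₀ hne) ha' ha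
    simp [coordProj_transpose_mul_coordProj, diagonal_apply, ha']
  · exact fun h => absurd hK₀ h

variable [Fintype V]

@[simp]
lemma coordProj_mul_apply {n : Type*} (X : Finset V) (M : Matrix V n ℝ) (x : X) (b : n) :
    (coordProj X * M) x b = M x b := by
  simp [mul_apply, coordProj]

@[simp]
lemma mul_coordProj_transpose_apply {m : Type*} (X : Finset V) (M : Matrix m V ℝ) (a : m)
    (x : X) : (M * (coordProj X)ᵀ) a x = M a x := by
  simp [mul_apply, coordProj]

lemma coordProj_mul_mul_transpose (S : Matrix V V ℝ) (X Y : Finset V) :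
    coordProj X * S * (coordProj Y)ᵀ = msub S X Y := by
  ext x y; simp [msub]

lemma coordProj_mul_coordProj_transpose_self (X : Finset V) :
    coordProj X * (coordProj X)ᵀ = 1 := by
  ext x y
  rw [coordProj_mul_apply, transpose_apply, one_apply]
  simp only [coordProj, of_apply, Subtype.ext_iff, eq_comm]

lemma coordProj_mul_coordProj_transpose_of_disjoint {X Y : Finset V} (h : Disjoint X Y) :
    coordProj X * (coordProj Y)ᵀ = 0 := by
  ext x y
  rw [coordProj_mul_apply, transpose_apply, Matrix.zero_apply]
  exact if_neg fun e : y.1 = x.1 => Finset.disjoint_left.mp h x.2 (e ▸ y.2)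

lemma coordProj_transpose_mul_coordProj_mul_transpose_of_subset {Z W : Finset V} (h : Z ⊆ W) :
    (coordProj W)ᵀ * coordProj W * (coordProj Z)ᵀ = (coordProj Z)ᵀ := by
  ext a z
  rw [mul_coordProj_transpose_apply, coordProj_transpose_mul_coordProj, diagonal_apply]
  by_cases hza : z.1 = a
  · subst hza; simp [coordProj, h z.2]
  · simp [coordProj, hza, Ne.symm hza]

end CoordinateProjections

section BlockOrthogonal

variable [DecidableEq V] {P : Finset (Finset V)}

def blockStack (P : Finset (Finset V)) (R : ∀ K : Finset V, Matrix K V ℝ) : Matrix V V ℝ :=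
  ∑ K ∈ P, (coordProj K)ᵀ * R K

lemma blockStack_transpose (R : ∀ K : Finset V, Matrix K V ℝ) :
    (blockStack P R)ᵀ = ∑ K ∈ P, (R K)ᵀ * coordProj K := by
  rw [blockStack, transpose_sum]; simp only [transpose_mul, transpose_transpose]

variable [Fintype V]

lemma inv_eq_of_mul_mul_transpose_mul_eq_one {S E D : Matrix V V ℝ} (h : E * S * Eᵀ * D = 1) :
    S⁻¹ = Eᵀ * D * E := by
  have hE : IsUnit Eᵀ.det := by
    rw [det_transpose]
    exact isUnit_det_of_right_inverse (by simpa only [Matrix.mul_assoc] using h)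
  refine inv_eq_left_inv ?_
  calc Eᵀ * D * E * S = Eᵀ * (D * (E * S * Eᵀ)) * (Eᵀ)⁻¹ := by
        rw [← mul_nonsing_inv_cancel_right Eᵀ (Eᵀ * D * E * S) hE]
        simp only [Matrix.mul_assoc]
    _ = 1 := by rw [mul_eq_one_comm.mp h, Matrix.mul_one, mul_nonsing_inv _ hE]

lemma coordProj_mul_blockStack (hdisj : (P : Set (Finset V)).PairwiseDisjoint id) {K : Finset V}
    (hK : K ∈ P) (R : ∀ K : Finset V, Matrix K V ℝ) : coordProj K * blockStack P R = R K := by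
  rw [blockStack, Matrix.mul_sum, Finset.sum_eq_single K, ← Matrix.mul_assoc,
    coordProj_mul_coordProj_transpose_self, Matrix.one_mul]
  · intro K' hK' hne
    rw [← Matrix.mul_assoc, coordProj_mul_coordProj_transpose_of_disjoint (X := K) (Y := K')
      (hdisj hK hK' hne.symm), Matrix.zero_mul]
  · exact fun h => absurd hK h

theorem inv_eq_sum_of_blockOrthogonal (hdisj : (P : Set (Finset V)).PairwiseDisjoint id)
    (hcover : ∀ v, ∃ K ∈ P, v ∈ K) (S : Matrix V V ℝ) (R : ∀ K : Finset V, Matrix K V ℝ)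
    (L : ∀ K : Finset V, Matrix K K ℝ) (hR : ∀ K ∈ P, ∀ K' ∈ P, K ≠ K' → R K * S * (R K')ᵀ = 0)
    (hL : ∀ K ∈ P, R K * S * (R K)ᵀ = L K) (hLunit : ∀ K ∈ P, IsUnit (L K).det) :
    S⁻¹ = ∑ K ∈ P, (R K)ᵀ * (L K)⁻¹ * R K := by
  obtain ⟨E, hE⟩ : ∃ E, E = blockStack P R := ⟨_, rfl⟩
  obtain ⟨D, hD⟩ : ∃ D, D = blockStack P fun K => (L K)⁻¹ * coordProj K := ⟨_, rfl⟩
  have hSE : ∀ K ∈ P, R K * S * Eᵀ = L K * coordProj K := fun K hK => by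
    rw [hE, blockStack_transpose, Matrix.mul_sum, Finset.sum_eq_single K, ← Matrix.mul_assoc,
      hL K hK]
    · intro K' hK' hne
      rw [← Matrix.mul_assoc, hR K hK K' hK' hne.symm, Matrix.zero_mul]
    · exact fun h => absurd hK h
  have hESED : E * S * Eᵀ * D = 1 := by
    nth_rewrite 1 [hE]
    rw [blockStack, Matrix.sum_mul, Matrix.sum_mul, Matrix.sum_mul,
      ← sum_coordProj_transpose_mul_coordProj hdisj hcover]
    refine Finset.sum_congr rfl fun K hK => ?_
    rw [show (coordProj K)ᵀ * R K * S * Eᵀ * D = (coordProj K)ᵀ * (R K * S * Eᵀ) * D by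
        simp only [Matrix.mul_assoc], hSE K hK, Matrix.mul_assoc, Matrix.mul_assoc, hD,
      coordProj_mul_blockStack hdisj hK, ← Matrix.mul_assoc (L K), mul_nonsing_inv _ (hLunit K hK),
      Matrix.one_mul]
  rw [inv_eq_of_mul_mul_transpose_mul_eq_one hESED, hE, blockStack_transpose, Matrix.sum_mul,
    Matrix.sum_mul]
  refine Finset.sum_congr rfl fun K hK => ?_
  rw [Matrix.mul_assoc (R K)ᵀ, hD, coordProj_mul_blockStack hdisj hK, Matrix.mul_assoc,
    Matrix.mul_assoc, coordProj_mul_blockStack hdisj hK, Matrix.mul_assoc]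

end BlockOrthogonal

section Regression

variable [DecidableEq V] (S : Matrix V V ℝ) (X Y : Finset V)

def regResid : Matrix X V ℝ := coordProj X - msub S X Y * (msub S Y Y)⁻¹ * coordProj Y

def schurCompl : Matrix X X ℝ := msub S X X - msub S X Y * (msub S Y Y)⁻¹ * msub S Y X

def padInv : Matrix V V ℝ := (coordProj X)ᵀ * (msub S X X)⁻¹ * coordProj X

lemma regResid_apply (x : X) (v : V) :
    regResid S X Y x v =
      (if x.1 = v then 1 else 0) -
        if h : v ∈ Y then (msub S X Y * (msub S Y Y)⁻¹) x ⟨v, h⟩ else 0 := by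
  rw [regResid, Matrix.sub_apply, mul_coordProj_apply]; rfl

lemma mul_regResid_apply {m : Type*} (M : Matrix m X ℝ) (a : m) (v : V) :
    (M * regResid S X Y) a v =
      (if h : v ∈ X then M a ⟨v, h⟩ else 0) -
        if h : v ∈ Y then (M * (msub S X Y * (msub S Y Y)⁻¹)) a ⟨v, h⟩ else 0 := by
  rw [regResid, Matrix.mul_sub, Matrix.sub_apply, mul_coordProj_apply, ← Matrix.mul_assoc,
    mul_coordProj_apply]

lemma padInv_apply {a b : V} (ha : a ∈ X) (hb : b ∈ X) :
    padInv S X a b = (msub S X X)⁻¹ ⟨a, ha⟩ ⟨b, hb⟩ :=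
  coordProj_transpose_mul_mul_coordProj_apply X _ ha hb

variable {S} in
lemma isUnit_det_msub (hS : S.PosDef) (X : Finset V) : IsUnit (msub S X X).det :=
  (Matrix.isUnit_iff_isUnit_det _).mp (hS.submatrix Subtype.val_injective).isUnit

variable {S X Y} in
lemma schurCompl_transpose (hS : Sᵀ = S) : (schurCompl S X Y)ᵀ = schurCompl S X Y := by
  have hsub : ∀ A B : Finset V, (msub S A B)ᵀ = msub S B A := fun A B => by
    ext b a; exact congr_fun₂ hS b.1 a.1
  rw [schurCompl, transpose_sub, transpose_mul, transpose_mul, transpose_nonsing_inv, hsub, hsub,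
    hsub, hsub, Matrix.mul_assoc]

variable [Fintype V]

lemma regResid_mul_mul_coordProj_transpose (Z : Finset V) :
    regResid S X Y * S * (coordProj Z)ᵀ =
      msub S X Z - msub S X Y * (msub S Y Y)⁻¹ * msub S Y Z := by
  rw [regResid, Matrix.sub_mul, Matrix.sub_mul, coordProj_mul_mul_transpose,
    Matrix.mul_assoc _ (coordProj Y), Matrix.mul_assoc _ (coordProj Y * S),
    coordProj_mul_mul_transpose, Matrix.mul_assoc]

lemma regResid_mul_mul_coordProj_transpose_self (hY : IsUnit (msub S Y Y).det) :
    regResid S X Y * S * (coordProj Y)ᵀ = 0 := by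
  rw [regResid_mul_mul_coordProj_transpose, nonsing_inv_mul_cancel_right _ _ hY, sub_self]

lemma regResid_mul_mul_regResid_transpose (hY : IsUnit (msub S Y Y).det) :
    regResid S X Y * S * (regResid S X Y)ᵀ = schurCompl S X Y := by
  conv_lhs => rw [regResid, transpose_sub, transpose_mul, Matrix.mul_sub, ← Matrix.mul_assoc,
    ← regResid, regResid_mul_mul_coordProj_transpose_self S X Y hY, Matrix.zero_mul, sub_zero,
    regResid_mul_mul_coordProj_transpose]
  rfl

lemma regResid_mul_mul_coordProj_transpose_eq_zero_of_gaussCI {U : Finset V}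
    (hCI : gaussCI S X (U \ Y) Y) (hY : IsUnit (msub S Y Y).det) :
    regResid S X Y * S * (coordProj U)ᵀ = 0 := by
  ext x u
  rw [mul_coordProj_transpose_apply, Matrix.zero_apply]
  by_cases hu : u.1 ∈ Y
  · simpa using congr_fun₂ (regResid_mul_mul_coordProj_transpose_self S X Y hY) x ⟨u, hu⟩
  · have h := congr_fun₂ hCI x ⟨u, Finset.mem_sdiff.2 ⟨u.2, hu⟩⟩
    rw [← regResid_mul_mul_coordProj_transpose] at h
    simpa using h

lemma regResid_mul_coordProj_transpose_mul_coordProj {U : Finset V} (h : X ∪ Y ⊆ U) :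
    regResid S X Y * (coordProj U)ᵀ * coordProj U = regResid S X Y := by
  ext x v
  rw [mul_coordProj_apply]
  split_ifs with hv
  · simp
  · have hxv : x.1 ≠ v := fun e => hv (e ▸ h (Finset.mem_union_left _ x.2))
    have hvY : v ∉ Y := fun hvY => hv (h (Finset.mem_union_right _ hvY))
    simp [regResid_apply, hxv, hvY]

lemma regResid_mul_mul_regResid_transpose_eq_zero_of_gaussCI {X' Y' U : Finset V}
    (hCI : gaussCI S X (U \ Y) Y) (hY : IsUnit (msub S Y Y).det) (hU : X' ∪ Y' ⊆ U) :
    regResid S X Y * S * (regResid S X' Y')ᵀ = 0 := by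
  rw [← regResid_mul_coordProj_transpose_mul_coordProj S X' Y' hU, transpose_mul, transpose_mul,
    transpose_transpose, ← Matrix.mul_assoc,
    regResid_mul_mul_coordProj_transpose_eq_zero_of_gaussCI S X Y hCI hY, Matrix.zero_mul]

lemma padInv_mul_coordProj_transpose_mul_coordProj :
    padInv S X * ((coordProj X)ᵀ * coordProj X) = padInv S X := by
  rw [padInv, Matrix.mul_assoc _ (coordProj X), ← Matrix.mul_assoc (coordProj X),
    coordProj_mul_coordProj_transpose_self, Matrix.one_mul]

variable {S X Y}

lemma padInv_mul_mul_coordProj_transpose_of_subset (hS : S.PosDef) {Z W : Finset V}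
    (hZ : Z ⊆ W) : padInv S W * S * (coordProj Z)ᵀ = (coordProj Z)ᵀ :=
  calc padInv S W * S * (coordProj Z)ᵀ
      = (coordProj W)ᵀ * (msub S W W)⁻¹ *
          (coordProj W * S * ((coordProj W)ᵀ * coordProj W * (coordProj Z)ᵀ)) := by
        rw [coordProj_transpose_mul_coordProj_mul_transpose_of_subset hZ]
        simp only [padInv, Matrix.mul_assoc]
    _ = (coordProj W)ᵀ * ((msub S W W)⁻¹ * (coordProj W * S * (coordProj W)ᵀ)) *
          (coordProj W * (coordProj Z)ᵀ) := by simp only [Matrix.mul_assoc]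
    _ = (coordProj Z)ᵀ := by
        rw [coordProj_mul_mul_transpose, nonsing_inv_mul _ (isUnit_det_msub hS W),
          Matrix.mul_one, ← Matrix.mul_assoc,
          coordProj_transpose_mul_coordProj_mul_transpose_of_subset hZ]

lemma exists_inv_schurCompl (hS : S.PosDef) (h : Disjoint X Y) :
    ∃ A : Matrix X X ℝ, A * schurCompl S X Y = 1 ∧
      A * regResid S X Y = coordProj X * padInv S (X ∪ Y) := by
  -- `Q * S` is the identity on the coordinates `X ∪ Y`: its `Y`-columns give
  -- `B = -A Σ_{X,Y} Σ_{Y,Y}⁻¹`, and then its `X`-columns give `A Λ = 1`.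
  set Q := coordProj X * padInv S (X ∪ Y)
  set A := Q * (coordProj X)ᵀ
  set B := Q * (coordProj Y)ᵀ
  have hQ : Q = A * coordProj X + B * coordProj Y := by
    calc Q = Q * ((coordProj X)ᵀ * coordProj X + (coordProj Y)ᵀ * coordProj Y) := by
          rw [← coordProj_transpose_mul_coordProj_union h, Matrix.mul_assoc,
            padInv_mul_coordProj_transpose_mul_coordProj]
      _ = A * coordProj X + B * coordProj Y := by
          rw [Matrix.mul_add, ← Matrix.mul_assoc, ← Matrix.mul_assoc]
  have hQS : ∀ Z ⊆ X ∪ Y, A * msub S X Z + B * msub S Y Z = coordProj X * (coordProj Z)ᵀ := by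
    intro Z hZ
    calc A * msub S X Z + B * msub S Y Z
        = (A * coordProj X + B * coordProj Y) * S * (coordProj Z)ᵀ := by
          rw [← coordProj_mul_mul_transpose, ← coordProj_mul_mul_transpose]
          simp only [Matrix.add_mul, Matrix.mul_assoc]
      _ = coordProj X * (padInv S (X ∪ Y) * S * (coordProj Z)ᵀ) := by
          rw [← hQ]; simp only [Q, Matrix.mul_assoc]
      _ = coordProj X * (coordProj Z)ᵀ := by
          rw [padInv_mul_mul_coordProj_transpose_of_subset hS hZ]
  have hB : B = -(A * msub S X Y * (msub S Y Y)⁻¹) := by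
    have hXY := hQS Y Finset.subset_union_right
    rw [coordProj_mul_coordProj_transpose_of_disjoint h, add_eq_zero_iff_eq_neg'] at hXY
    conv_lhs => rw [← mul_nonsing_inv_cancel_right (msub S Y Y) B (isUnit_det_msub hS Y), hXY]
    rw [Matrix.neg_mul]
  refine ⟨A, ?_, ?_⟩
  · have hXX := hQS X Finset.subset_union_left
    rw [hB, coordProj_mul_coordProj_transpose_self] at hXX
    rw [schurCompl, Matrix.mul_sub, ← hXX]
    simp only [Matrix.neg_mul, Matrix.mul_assoc, sub_eq_add_neg]
  · rw [hQ, hB, regResid, Matrix.mul_sub, Matrix.neg_mul, ← sub_eq_add_neg]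
    simp only [Matrix.mul_assoc]

lemma isUnit_det_schurCompl (hS : S.PosDef) (h : Disjoint X Y) :
    IsUnit (schurCompl S X Y).det :=
  let ⟨_, hA, _⟩ := exists_inv_schurCompl hS h
  isUnit_det_of_left_inverse hA

lemma inv_schurCompl_mul_regResid (hS : S.PosDef) (h : Disjoint X Y) :
    (schurCompl S X Y)⁻¹ * regResid S X Y = coordProj X * padInv S (X ∪ Y) := by
  obtain ⟨A, hA, hAR⟩ := exists_inv_schurCompl hS h
  rwa [inv_eq_left_inv hA]

end Regression

namespace PreGraph

variable {G : PreGraph V} {a b c d : V}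

lemma und_comm : G.und a b ↔ G.und b a := Or.comm

lemma colliderTriple.adj_left (h : G.colliderTriple a c b) : G.adj a c := by
  unfold colliderTriple at h; unfold adj
  rcases h with ⟨h, -⟩ | ⟨h, -⟩ | ⟨h, -⟩ | ⟨h, -⟩ | ⟨h, -⟩ <;> tauto

lemma colliderTriple.adj_right (h : G.colliderTriple a c b) : G.adj c b := by
  unfold colliderTriple at h; unfold adj und at *
  rcases h with ⟨-, h⟩ | ⟨-, h⟩ | ⟨-, h⟩ | ⟨-, h⟩ | ⟨-, h⟩ <;> tauto

variable (G) in
def PureColliderReachable (a b : V) : Prop :=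
  ∃ ρ : G.Route, ρ.IsPureCollider ∧ ρ.nodes 0 = a ∧ ρ.nodes ρ.len = b

lemma pureColliderReachable_of_adj (h : G.adj a b) : G.PureColliderReachable a b :=
  ⟨⟨1, fun n => if n = 0 then a else b, fun k hk => by
    obtain rfl : k = 0 := (by omega)
    simpa using h⟩, ⟨le_rfl, fun k hk (hk' : k < 1) => absurd hk' (by omega)⟩, rfl, rfl⟩

lemma pureColliderReachable_of_colliderTriples (f : ℕ → V) {n : ℕ} (hn : 2 ≤ n)
    (h : ∀ k, 0 < k → k < n → G.colliderTriple (f (k - 1)) (f k) (f (k + 1))) :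
    G.PureColliderReachable (f 0) (f n) := by
  refine ⟨⟨n, f, fun k hk => ?_⟩,
    ⟨(by show 1 ≤ n; omega), fun k hk hk' => .inl ⟨hk, hk', h k hk hk'⟩⟩, rfl, rfl⟩
  rcases Nat.eq_zero_or_pos k with rfl | hk0
  · exact (h 1 one_pos (by omega)).adj_left
  · simpa using (h k hk0 hk).adj_right

lemma pureColliderReachable_of_colliderTriple (h : G.colliderTriple a c b) :
    G.PureColliderReachable a b := by
  simpa using pureColliderReachable_of_colliderTriples (G := G) (fun k => [a, c].getD k b) le_rfl
    fun k hk hk' => by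
      obtain rfl : k = 1 := (by omega)
      simpa using h

lemma pureColliderReachable_of_colliderTriple_colliderTriple (h₁ : G.colliderTriple a c d)
    (h₂ : G.colliderTriple c d b) : G.PureColliderReachable a b := by
  simpa using pureColliderReachable_of_colliderTriples (G := G) (fun k => [a, c, d].getD k b)
    (n := 3) (by norm_num) fun k hk hk' => by
      interval_cases k
      · simpa using h₁
      · simpa using h₂

lemma pureColliderReachable_of_colliderSection (f : ℕ → V) (n : ℕ) (hfirst : G.solid (f 0) (f 1))
    (hund : ∀ m, 1 ≤ m → m < n + 1 → G.und (f m) (f (m + 1)))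
    (hlast : G.solid (f (n + 2)) (f (n + 1))) : G.PureColliderReachable (f 0) (f (n + 2)) := by
  refine ⟨⟨n + 2, f, fun k hk => ?_⟩, ⟨(by show 1 ≤ n + 2; omega), fun k hk (hk' : k < n + 2) =>
    .inr ⟨1, n + 1, ⟨le_rfl, by omega, le_rfl, hund, hfirst, hlast⟩, hk, by omega⟩⟩, rfl, rfl⟩
  rcases Nat.eq_zero_or_pos k with rfl | hk0
  · exact .inr (.inl hfirst)
  · rcases Nat.lt_or_ge k (n + 1) with hkn | hkn
    · exact .inl (hund k hk0 hkn)
    · obtain rfl : k = n + 1 := by omega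
      exact .inr (.inr (.inl hlast))

lemma pureColliderReachable_of_solid_solid {i j : V} (hc : G.solid i c) (hd : G.solid j d)
    (hcd : G.uconn c d) : G.PureColliderReachable i j := by
  obtain ⟨n, g, h0, hn, hs⟩ := exists_seq_of_reflTransGen hcd
  have := pureColliderReachable_of_colliderSection
    (fun m => if m = 0 then i else if m ≤ n + 1 then g (m - 1) else j) n
    (by simpa [h0] using hc) (fun m hm hmn => by
      simpa [show m ≠ 0 by omega, show m ≤ n + 1 by omega, show m + 1 ≤ n + 1 by omega,
        Nat.sub_add_cancel hm] using hs (m - 1) (by omega))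
    (by simpa [hn] using hd)
  simpa using this

/-- The hypotheses on `i` and `j` describe where the entries `(E_K)_{k,i}` and
`(Λ_K⁻¹ E_K)_{k,j}` can be nonzero when `i` is not a father of `K`. -/
lemma pureColliderReachable_of_support {i j k : V} (hij : i ≠ j) (hi : k = i ∨ G.dashed i k)
    (hj : j = k ∨ G.und j k ∨ G.solid j k ∨ ∃ l, (l = k ∨ G.und l k) ∧ G.dashed j l) :
    G.PureColliderReachable i j := by
  rcases hi with rfl | hik <;> rcases hj with rfl | hjk | hjk | ⟨l, rfl | hlk, hjl⟩
  · exact absurd rfl hij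
  · exact pureColliderReachable_of_adj (.inl (und_comm.mp hjk))
  · exact pureColliderReachable_of_adj (.inr (.inr (.inl hjk)))
  · exact pureColliderReachable_of_adj (.inr (.inr (.inr (.inr hjl))))
  · exact pureColliderReachable_of_colliderTriple (.inr (.inr (.inl ⟨und_comm.mp hlk, hjl⟩)))
  · exact pureColliderReachable_of_adj (.inr (.inr (.inr (.inl hik))))
  · exact pureColliderReachable_of_colliderTriple (.inr (.inl ⟨hik, und_comm.mp hjk⟩))
  · exact pureColliderReachable_of_colliderTriple (.inr (.inr (.inr (.inl ⟨hik, hjk⟩))))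
  · exact pureColliderReachable_of_colliderTriple (.inl ⟨hik, hjl⟩)
  · exact pureColliderReachable_of_colliderTriple_colliderTriple
      (.inr (.inl ⟨hik, und_comm.mp hlk⟩)) (.inr (.inr (.inl ⟨und_comm.mp hlk, hjl⟩)))

section Finite

variable [Fintype V] (G)

lemma mem_fa_singleton : b ∈ G.fa {a} ↔ G.solid b a := by simp [fa]

lemma mem_mo_singleton : b ∈ G.mo {a} ↔ G.dashed b a := by simp [mo]

lemma mem_nb_singleton : b ∈ G.nb {a} ↔ G.und b a := by simp [nb]

variable [DecidableEq V]

lemma lam_eq_schurCompl (S : Matrix V V ℝ) (K : Finset V) :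
    G.lam S K = schurCompl S K (G.pa K) := rfl

def componentPrecision (S : Matrix V V ℝ) (K : Finset V) : Matrix V V ℝ :=
  (regResid S K (G.pa K))ᵀ * (G.lam S K)⁻¹ * regResid S K (G.pa K)

lemma componentPrecision_transpose {S : Matrix V V ℝ} (hS : Sᵀ = S) (K : Finset V) :
    (G.componentPrecision S K)ᵀ = G.componentPrecision S K := by
  rw [componentPrecision, transpose_mul, transpose_mul, transpose_transpose, transpose_nonsing_inv,
    lam_eq_schurCompl, schurCompl_transpose hS, Matrix.mul_assoc]

end Finite

end PreGraph

namespace ChainGraph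

variable (G : ChainGraph V) {a b : V}

lemma uconn_symm (h : G.uconn a b) : G.uconn b a := by
  induction h with
  | refl => exact .refl
  | tail _ hcd ih => exact .head (PreGraph.und_comm.mp hcd) ih

lemma reflTransGen_fwd_of_uconn (h : G.uconn a b) : Relation.ReflTransGen G.fwd a b := by
  induction h with
  | refl => exact .refl
  | tail _ hcd ih => exact ih.tail (.inl hcd)

lemma not_reflTransGen_fwd_of_directed (hab : G.solid a b ∨ G.dashed a b) :
    ¬ Relation.ReflTransGen G.fwd b a := by
  intro h
  obtain ⟨n, f, h0, hn, hs⟩ := exists_seq_of_reflTransGen h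
  refine G.no_semidirected_cycle ⟨fun i => if i = 0 then a else f (i - 1), n + 1, by omega,
    by simp [hn], by simpa [h0] using hab, fun i hi => ?_⟩
  rcases Nat.eq_zero_or_pos i with rfl | hi0
  · have hfwd : G.fwd a b := .inr hab
    simpa [h0] using hfwd
  · simpa [hi0.ne', Nat.sub_add_cancel hi0] using hs (i - 1) (by omega)

section Finite

variable [Fintype V]

lemma mem_cc : b ∈ G.cc a ↔ G.uconn a b := by simp [PreGraph.cc]

lemma mem_cc_self (a : V) : a ∈ G.cc a := (G.mem_cc).mpr .refl

lemma cc_eq_cc_of_mem (h : b ∈ G.cc a) : G.cc b = G.cc a := by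
  ext x
  simp only [mem_cc] at h ⊢
  exact ⟨fun hx => h.trans hx, fun hx => (G.uconn_symm h).trans hx⟩

lemma exists_directed_of_mem_pa [DecidableEq V] {X : Finset V} {p : V} (hp : p ∈ G.pa X) :
    ∃ a ∈ X, G.solid p a ∨ G.dashed p a := by
  simp only [PreGraph.pa, PreGraph.fa, PreGraph.mo, Finset.mem_union, Finset.mem_filter,
    Finset.mem_univ, true_and] at hp
  rcases hp with ⟨a, ha, h⟩ | ⟨a, ha, h⟩
  exacts [⟨a, ha, .inl h⟩, ⟨a, ha, .inr h⟩]

def ancestorCount (a : V) : ℕ :=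
  (Finset.univ.filter fun x => Relation.ReflTransGen G.fwd x a).card

lemma ancestorCount_eq_of_uconn (h : G.uconn a b) : G.ancestorCount a = G.ancestorCount b := by
  suffices ∀ x, Relation.ReflTransGen G.fwd x a ↔ Relation.ReflTransGen G.fwd x b by
    simp only [ancestorCount, this]
  exact fun x => ⟨fun hx => hx.trans (G.reflTransGen_fwd_of_uconn h),
    fun hx => hx.trans (G.reflTransGen_fwd_of_uconn (G.uconn_symm h))⟩

lemma ancestorCount_lt_of_directed (h : G.solid a b ∨ G.dashed a b) :
    G.ancestorCount a < G.ancestorCount b := by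
  refine Finset.card_lt_card ((Finset.ssubset_iff_of_subset fun x hx => ?_).mpr ⟨b, ?_, ?_⟩)
  · simp only [Finset.mem_filter, Finset.mem_univ, true_and] at hx ⊢
    exact hx.tail (.inr h)
  · simpa using Relation.ReflTransGen.refl
  · simpa using G.not_reflTransGen_fwd_of_directed h

/-- The index of the chain component in an enumeration of `Finset V` breaks the ties of
`ancestorCount` between distinct components. -/
def topoRank (a : V) : ℕ :=
  G.ancestorCount a * Fintype.card (Finset V) + Fintype.equivFin (Finset V) (G.cc a)

lemma isTopoOrder_topoRank : G.IsTopoOrder G.topoRank := by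
  refine ⟨fun a b h => ?_, fun a b h => ?_⟩
  · rw [topoRank, topoRank, G.ancestorCount_eq_of_uconn h,
      G.cc_eq_cc_of_mem ((G.mem_cc).mpr h)]
  · have h₁ := G.ancestorCount_lt_of_directed h
    have h₂ := (Fintype.equivFin (Finset V) (G.cc a)).isLt
    unfold topoRank
    nlinarith

lemma cc_eq_of_topoRank_eq (h : G.topoRank a = G.topoRank b) : G.cc a = G.cc b := by
  have hmod := congrArg (· % Fintype.card (Finset V)) h
  simp only [topoRank, Nat.mul_add_mod_of_lt (Fin.isLt _)] at hmod
  exact (Fintype.equivFin (Finset V)).injective (Fin.ext hmod)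

variable [DecidableEq V]

lemma eq_cc_of_mem_ccs {K : Finset V} (hK : K ∈ G.ccs) (ha : a ∈ K) : K = G.cc a := by
  obtain ⟨v, -, rfl⟩ := Finset.mem_image.mp hK
  exact (G.cc_eq_cc_of_mem ha).symm

lemma cc_mem_ccs (a : V) : G.cc a ∈ G.ccs := Finset.mem_image_of_mem _ (Finset.mem_univ a)

lemma ccs_pairwiseDisjoint : (G.ccs : Set (Finset V)).PairwiseDisjoint id := by
  intro K hK K' hK' hne
  refine Finset.disjoint_left.mpr fun x hx hx' => hne ?_
  rw [G.eq_cc_of_mem_ccs hK hx, G.eq_cc_of_mem_ccs hK' hx']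

lemma disjoint_pa_of_mem_ccs {K : Finset V} (hK : K ∈ G.ccs) : Disjoint K (G.pa K) := by
  refine Finset.disjoint_left.mpr fun p hpK hp => ?_
  obtain ⟨a, ha, hpa⟩ := G.exists_directed_of_mem_pa hp
  rw [G.eq_cc_of_mem_ccs hK ha, mem_cc] at hpK
  exact G.not_reflTransGen_fwd_of_directed hpa (G.reflTransGen_fwd_of_uconn hpK)

end Finite

end ChainGraph

namespace ChainGraph

variable [Fintype V] [DecidableEq V] (G : ChainGraph V) {S : Matrix V V ℝ} {K : Finset V}

lemma regResid_mul_mul_regResid_transpose_eq_zero_of_topoRank_lt (hS : S.PosDef)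
    (h1 : G.eq1 S) {i i' : V} (hlt : G.topoRank i' < G.topoRank i) :
    regResid S (G.cc i) (G.pa (G.cc i)) * S * (regResid S (G.cc i') (G.pa (G.cc i')))ᵀ = 0 := by
  have hπ := G.isTopoOrder_topoRank
  refine regResid_mul_mul_regResid_transpose_eq_zero_of_gaussCI S _ _ (h1 _ hπ i)
    (isUnit_det_msub hS _) fun x hx => Finset.mem_filter.mpr ⟨Finset.mem_univ _, ?_⟩
  rcases Finset.mem_union.mp hx with hx | hx
  · rwa [← hπ.1 i' x ((G.mem_cc).mp hx)]
  · obtain ⟨a, ha, hxa⟩ := G.exists_directed_of_mem_pa hx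
    have := hπ.2 x a hxa
    rw [← hπ.1 i' a ((G.mem_cc).mp ha)] at this
    omega

theorem inv_eq_sum_componentPrecision (hS : S.PosDef) (h1 : G.eq1 S) :
    S⁻¹ = ∑ K ∈ G.ccs, G.componentPrecision S K := by
  have hSt : Sᵀ = S := by
    simpa [conjTranspose_eq_transpose_of_trivial] using hS.isHermitian.eq
  refine inv_eq_sum_of_blockOrthogonal G.ccs_pairwiseDisjoint
    (fun v => ⟨_, G.cc_mem_ccs v, G.mem_cc_self v⟩) S (fun K => regResid S K (G.pa K))
    (fun K => G.lam S K) ?_ (fun K _ => regResid_mul_mul_regResid_transpose S K _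
      (isUnit_det_msub hS _)) (fun K hK => isUnit_det_schurCompl hS (G.disjoint_pa_of_mem_ccs hK))
  intro K hK K' hK' hne
  obtain ⟨i, -, rfl⟩ := Finset.mem_image.mp hK
  obtain ⟨i', -, rfl⟩ := Finset.mem_image.mp hK'
  rcases lt_or_gt_of_ne fun h => hne (G.cc_eq_of_topoRank_eq h) with hlt | hlt
  · simpa [Matrix.mul_assoc, hSt] using congrArg transpose
      (G.regResid_mul_mul_regResid_transpose_eq_zero_of_topoRank_lt hS h1 hlt)
  · exact G.regResid_mul_mul_regResid_transpose_eq_zero_of_topoRank_lt hS h1 hlt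

lemma eq_or_dashed_of_regResid_ne_zero (hK : K ∈ G.ccs) (h6 : G.eq6 S) {i : V}
    (hi : i ∉ G.fa K) {k : K} (hne : regResid S K (G.pa K) k i ≠ 0) :
    k.1 = i ∨ G.dashed i k := by
  rw [regResid_apply] at hne
  by_cases hiP : i ∈ G.pa K
  · have hik : k.1 ≠ i := fun e =>
      Finset.disjoint_left.mp (G.disjoint_pa_of_mem_ccs hK) (e ▸ k.2) hiP
    have hiM : i ∈ G.mo K := (Finset.mem_union.mp hiP).resolve_left hi
    rw [dif_pos hiP, if_neg hik, zero_sub, neg_ne_zero] at hne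
    by_contra hcon
    exact hne (h6 K hK k k.2 i hiP hiM fun h => hcon (.inr ((G.mem_mo_singleton).mp h)))
  · by_contra hcon
    simp [hiP, (not_or.mp hcon).1] at hne

lemma eq_or_und_or_solid_or_dashed_of_lamInv_mul_regResid_ne_zero (hS : S.PosDef)
    (hK : K ∈ G.ccs) (h : G.eqs S) {k : K} {j : V}
    (hne : ((G.lam S K)⁻¹ * regResid S K (G.pa K)) k j ≠ 0) :
    j = k ∨ G.und j k ∨ G.solid j k ∨ ∃ l : V, (l = k ∨ G.und l k) ∧ G.dashed j l := by
  obtain ⟨-, h6, h7, h8⟩ := h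
  have hΛ : ∀ l : K, (G.lam S K)⁻¹ k l ≠ 0 → l.1 = k ∨ G.und l k := fun l hl => by
    by_contra hcon
    obtain ⟨hlk, hnb⟩ := not_or.mp hcon
    exact hl (h8 K hK k k.2 l l.2 hlk fun h => hnb ((G.mem_nb_singleton).mp h))
  have hdisj := G.disjoint_pa_of_mem_ccs hK
  by_cases hjF : j ∈ G.fa K
  · -- `Λ_K⁻¹ E_K` is the `K`-row block of `Ω`, so Equation 7 applies
    have hjP : j ∈ G.pa K := Finset.mem_union_left _ hjF
    refine .inr (.inr (.inl ?_))
    by_contra hcon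
    rw [G.lam_eq_schurCompl, inv_schurCompl_mul_regResid hS hdisj, coordProj_mul_apply,
      padInv_apply _ _ (Finset.mem_union_left _ k.2) (Finset.mem_union_right _ hjP)] at hne
    exact hne (h7 K hK k k.2 j hjP hjF fun h => hcon ((G.mem_fa_singleton).mp h))
  rw [mul_regResid_apply] at hne
  by_cases hjK : j ∈ K
  · rw [dif_pos hjK, dif_neg (Finset.disjoint_left.mp hdisj hjK), sub_zero] at hne
    rcases hΛ _ hne with h | h
    exacts [.inl h, .inr (.inl h)]
  by_cases hjP : j ∈ G.pa K
  · have hjM : j ∈ G.mo K := (Finset.mem_union.mp hjP).resolve_left hjF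
    rw [dif_neg hjK, dif_pos hjP, zero_sub, neg_ne_zero, mul_apply] at hne
    obtain ⟨l, -, hl⟩ := Finset.exists_ne_zero_of_sum_ne_zero hne
    obtain ⟨hkl, hlj⟩ := mul_ne_zero_iff.mp hl
    refine .inr (.inr (.inr ⟨l, hΛ l hkl, ?_⟩))
    by_contra hcon
    exact hlj (h6 K hK l l.2 j hjP hjM fun h => hcon ((G.mem_mo_singleton).mp h))
  · simp [hjK, hjP] at hne

lemma componentPrecision_apply_eq_zero (hS : S.PosDef) (hK : K ∈ G.ccs) (h : G.eqs S) {i j : V}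
    (hij : i ≠ j) (hij' : ¬ G.PureColliderReachable i j) (hji' : ¬ G.PureColliderReachable j i) :
    G.componentPrecision S K i j = 0 := by
  have hfa : ∀ a b, a ≠ b → ¬ G.PureColliderReachable a b → a ∉ G.fa K →
      G.componentPrecision S K a b = 0 := by
    intro a b hab hR ha
    rw [PreGraph.componentPrecision, Matrix.mul_assoc, mul_apply]
    refine Finset.sum_eq_zero fun k _ => ?_
    by_contra hne
    obtain ⟨h₁, h₂⟩ := mul_ne_zero_iff.mp hne
    exact hR (PreGraph.pureColliderReachable_of_support hab
      (G.eq_or_dashed_of_regResid_ne_zero hK h.2.1 ha h₁)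
      (G.eq_or_und_or_solid_or_dashed_of_lamInv_mul_regResid_ne_zero hS hK h h₂))
  by_cases hi : i ∉ G.fa K
  · exact hfa i j hij hij' hi
  by_cases hj : j ∉ G.fa K
  · have hSt : Sᵀ = S := by
      simpa [conjTranspose_eq_transpose_of_trivial] using hS.isHermitian.eq
    rw [← G.componentPrecision_transpose hSt, transpose_apply]
    exact hfa j i hij.symm hji' hj
  simp only [not_not, PreGraph.fa, Finset.mem_filter, Finset.mem_univ, true_and] at hi hj
  obtain ⟨c, hc, hic⟩ := hi
  obtain ⟨d, hd, hjd⟩ := hj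
  rw [G.eq_cc_of_mem_ccs hK hc, mem_cc] at hd
  exact absurd (PreGraph.pureColliderReachable_of_solid_solid hic hjd hd) hij'

end ChainGraph

theorem precision_zero_of_no_pure_collider_route_general
    {V : Type*} [Fintype V] [DecidableEq V] (G : ChainGraph V)
    (S : Matrix V V ℝ) (hS : S.PosDef) (h : G.toPreGraph.eqs S) :
    ∀ i j : V, i ≠ j →
      (¬ ∃ ρ : G.toPreGraph.Route, ρ.IsPureCollider ∧
        ((ρ.nodes 0 = i ∧ ρ.nodes ρ.len = j) ∨ (ρ.nodes 0 = j ∧ ρ.nodes ρ.len = i))) →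
      S⁻¹ i j = 0 := by
  intro i j hij hroute
  rw [G.inv_eq_sum_componentPrecision hS h.1, Matrix.sum_apply]
  exact Finset.sum_eq_zero fun K hK => G.componentPrecision_apply_eq_zero hS hK h hij
    (fun ⟨ρ, hρ, h0, hl⟩ => hroute ⟨ρ, hρ, .inl ⟨h0, hl⟩⟩)
    (fun ⟨ρ, hρ, h0, hl⟩ => hroute ⟨ρ, hρ, .inr ⟨h0, hl⟩⟩)

/-- **Lemma 5.** If the Gaussian distribution `N(0, Σ)` satisfies Equation 1 and the zero
restrictions of Equations 6–8 with respect to a UCG `G`, then `(Σ⁻¹)_{i,j} = 0` whenever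
there is no pure collider route in `G` between the distinct nodes `i` and `j`. -/
theorem precision_zero_of_no_pure_collider_route
    {V : Type*} [Fintype V] [DecidableEq V] (G : ChainGraph V) (hG : G.IsUCG)
    (S : Matrix V V ℝ) (hS : S.PosDef) (h : G.toPreGraph.eqs S) :
    ∀ i j : V, i ≠ j →
      (¬ ∃ ρ : G.toPreGraph.Route, ρ.IsPureCollider ∧
        ((ρ.nodes 0 = i ∧ ρ.nodes ρ.len = j) ∨ (ρ.nodes 0 = j ∧ ρ.nodes ρ.len = i))) →
      S⁻¹ i j = 0 :=
  precision_zero_of_no_pure_collider_route_general G S hS h
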